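/- Let X be an n×d real matrix of rank d, let α ≥ 0, and let Σ be the diagonal matrix with Σ_{ii} = α and Σ_{jj} = 1 for j ≠ i, where 1 + (α²−1)ℓ_i(X) ≠ 0. Then for every j ≠ i, ℓ_j(ΣX) = ℓ_j(X) − (α²−1)(x_jᵀ(XᵀX)⁻¹x_i)² / (1 + (α²−1)ℓ_i(X)). -/
import Mathlib


open Matrix

private lemma mul_vecMulVec' {d : ℕ} (A : Matrix (Fin d) (Fin d) ℝ) (w v : Fin d → ℝ) :
    A * vecMulVec w v = vecMulVec (A *ᵥ w) v := by
  ext a b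
  simp [Matrix.mul_apply, vecMulVec_apply, Matrix.mulVec, dotProduct, Finset.sum_mul, mul_assoc]

private lemma vecMulVec_mul' {d : ℕ} (A : Matrix (Fin d) (Fin d) ℝ) (w v : Fin d → ℝ) :
    vecMulVec w v * A = vecMulVec w (v ᵥ* A) := by
  ext a b
  simp [Matrix.mul_apply, vecMulVec_apply, Matrix.vecMul, dotProduct, Finset.mul_sum, mul_assoc]

private lemma vecMulVec_mulVec' {d : ℕ} (w v x : Fin d → ℝ) :
    vecMulVec w v *ᵥ x = (v ⬝ᵥ x) • w := by
  ext a
  simp only [Matrix.mulVec, vecMulVec_apply, dotProduct, Pi.smul_apply, smul_eq_mul,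
    Finset.sum_mul]
  exact Finset.sum_congr rfl fun k _ => by ring

private lemma vecMulVec_smul_left' {d : ℕ} (r : ℝ) (w v : Fin d → ℝ) :
    vecMulVec (r • w) v = r • vecMulVec w v := by
  ext a b
  simp [vecMulVec_apply, mul_assoc]

private lemma isUnit_of_rank_eq {d : ℕ} (A : Matrix (Fin d) (Fin d) ℝ)
    (h : A.rank = d) : IsUnit A := by
  rw [← Matrix.mulVec_surjective_iff_isUnit]
  have : LinearMap.range A.mulVecLin = ⊤ := by
    apply Submodule.eq_top_of_finrank_eq
    rw [← Matrix.rank, h, Module.finrank_fintype_fun_eq_card, Fintype.card_fin]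
  have hs := LinearMap.range_eq_top.mp this
  rwa [Matrix.coe_mulVecLin] at hs

theorem leverage_score_of_scaled_row_other
    {n d : ℕ} (X : Matrix (Fin n) (Fin d) ℝ) (hX : X.rank = d)
    (α : ℝ) (hα : 0 ≤ α) (i : Fin n)
    (Y : Matrix (Fin n) (Fin d) ℝ)
    (hY : Y = Matrix.diagonal (fun j : Fin n => if j = i then α else 1) * X)
    (hden : 1 + (α ^ 2 - 1) * (X i ⬝ᵥ ((Xᵀ * X)⁻¹ *ᵥ X i)) ≠ 0)
    (hrank : Y.rank = d) :
    ∀ j : Fin n, j ≠ i →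
      Y j ⬝ᵥ ((Yᵀ * Y)⁻¹ *ᵥ Y j)
        = X j ⬝ᵥ ((Xᵀ * X)⁻¹ *ᵥ X j) -
          (α ^ 2 - 1) * (X j ⬝ᵥ ((Xᵀ * X)⁻¹ *ᵥ X i)) ^ 2 /
            (1 + (α ^ 2 - 1) * (X i ⬝ᵥ ((Xᵀ * X)⁻¹ *ᵥ X i))) := by
  intro j hj
  set A := Xᵀ * X with hA
  set B := A⁻¹ with hB
  set u := X i with hu
  set c := α ^ 2 - 1 with hc
  set den := 1 + c * (u ⬝ᵥ B *ᵥ u) with hdendef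
  set p := B *ᵥ u with hp
  -- symmetry
  have hAsym : Aᵀ = A := by rw [hA, Matrix.transpose_mul, Matrix.transpose_transpose]
  have hBsym : Bᵀ = B := by rw [hB, Matrix.transpose_nonsing_inv, hAsym]
  -- invertibility of A
  have hU : IsUnit A := isUnit_of_rank_eq A (by rw [hA, Matrix.rank_transpose_mul_self, hX])
  have hAB : A * B = 1 := Matrix.mul_nonsing_inv A ((Matrix.isUnit_iff_isUnit_det A).mp hU)
  -- Y j = X j
  have hYj : Y j = X j := by
    subst hY
    funext a
    rw [Matrix.diagonal_mul, if_neg hj, one_mul]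
  -- Yᵀ * Y = A + c • u uᵀ
  have hYtY : Yᵀ * Y = A + c • vecMulVec u u := by
    subst hY
    ext a b
    have hterm : ∀ k : Fin n,
        ((if k = i then α else 1) * X k a) * ((if k = i then α else 1) * X k b)
          = X k a * X k b + (if k = i then c * (X i a * X i b) else 0) := by
      intro k
      by_cases h : k = i
      · subst h
        rw [if_pos rfl, if_pos rfl, hc]
        ring
      · rw [if_neg h, if_neg h]
        ring
    have lhs : (((Matrix.diagonal (fun j : Fin n => if j = i then α else 1)) * X)ᵀ *
        ((Matrix.diagonal (fun j : Fin n => if j = i then α else 1)) * X)) a b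
          = ∑ k : Fin n, ((if k = i then α else 1) * X k a) * ((if k = i then α else 1) * X k b) := by
      rw [Matrix.mul_apply]
      exact Finset.sum_congr rfl fun k _ => by
        rw [Matrix.transpose_apply, Matrix.diagonal_mul, Matrix.diagonal_mul]
    rw [lhs, Finset.sum_congr rfl fun k _ => hterm k, Finset.sum_add_distrib,
      Finset.sum_ite_eq' Finset.univ i]
    simp [Matrix.mul_apply, vecMulVec_apply, hA, hu, mul_comm]
  -- Sherman–Morrison inverse
  have hAp : A *ᵥ p = u := by
    rw [hp, Matrix.mulVec_mulVec, hAB, Matrix.one_mulVec]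
  have hvm : u ᵥ* B = p := by
    rw [← hBsym, Matrix.vecMul_transpose]
  have hkey : (A + c • vecMulVec u u) * (B - (c / den) • vecMulVec p p) = 1 := by
    simp only [Matrix.add_mul, Matrix.mul_sub, Matrix.mul_smul, Matrix.smul_mul,
      mul_vecMulVec', vecMulVec_mul', vecMulVec_mulVec', vecMulVec_smul_left',
      hAB, hAp, hvm, smul_smul]
    ext a b
    simp only [Matrix.add_apply, Matrix.sub_apply, Matrix.smul_apply, vecMulVec_apply,
      Matrix.one_apply, smul_eq_mul]
    have hden' : den ≠ 0 := hden
    field_simp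
    split_ifs <;> ring
  have hinv : (Yᵀ * Y)⁻¹ = B - (c / den) • vecMulVec p p := by
    rw [hYtY]; exact Matrix.inv_eq_right_inv hkey
  rw [hinv, hYj, Matrix.sub_mulVec, Matrix.smul_mulVec, vecMulVec_mulVec',
    dotProduct_sub, dotProduct_smul, dotProduct_smul]
  have hjp : X j ⬝ᵥ p = X j ⬝ᵥ (B *ᵥ u) := rfl
  have hpj : p ⬝ᵥ X j = X j ⬝ᵥ p := dotProduct_comm _ _
  have hden' : den ≠ 0 := hden
  rw [hpj]
  simp only [smul_eq_mul]
  ring
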